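/- Let Q be a left quasigroup and α a congruence of Q. Then Q/α is a projection left quasigroup if and only if the orbit congruence 𝒪_Q is contained in α. Consequently, Q is connected if and only if the two-element projection left quasigroup is not a homomorphic image of Q. -/

import Mathlib

/-- A left quasigroup: left multiplications are bijective. -/
class LQgrp (Q : Type*) where
  mul : Q → Q → Q
  ld : Q → Q → Q
  ld_mul : ∀ x y, ld x (mul x y) = y
  mul_ld : ∀ x y, mul x (ld x y) = y

namespace LQgrp

variable {Q : Type*} [LQgrp Q]

/-- Left multiplication as a permutation. -/
def LM (a : Q) : Equiv.Perm Q := ⟨mul a, ld a, ld_mul a, mul_ld a⟩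

/-- The left multiplication group. -/
def LMlt (Q : Type*) [LQgrp Q] : Subgroup (Equiv.Perm Q) :=
  Subgroup.closure (Set.range (LM : Q → Equiv.Perm Q))

/-- Subalgebras: subsets closed under both operations. -/
def IsSubalg (S : Set Q) : Prop :=
  (∀ a ∈ S, ∀ b ∈ S, mul a b ∈ S) ∧ (∀ a ∈ S, ∀ b ∈ S, ld a b ∈ S)

/-- The subalgebra generated by a set. -/
def Sg (X : Set Q) : Set Q := ⋂₀ {S | IsSubalg S ∧ X ⊆ S}

/-- A subset is connected if the group generated by its left translations
acts transitively on it. -/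
def ConnectedSet (S : Set Q) : Prop :=
  ∀ a ∈ S, ∀ b ∈ S, ∃ h ∈ Subgroup.closure ((LM : Q → Equiv.Perm Q) '' S), h a = b

/-- `Q` is connected if `LMlt Q` acts transitively. -/
def Connected (Q : Type*) [LQgrp Q] : Prop := ∀ a b : Q, ∃ h ∈ LMlt Q, h a = b

/-- `Q` is superconnected if every subalgebra is connected. -/
def Superconnected (Q : Type*) [LQgrp Q] : Prop :=
  ∀ S : Set Q, IsSubalg S → ConnectedSet S

/-- Faithfulness of a subalgebra: distinct elements have distinct left translations. -/
def FaithfulOn (S : Set Q) : Prop :=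
  ∀ a ∈ S, ∀ b ∈ S, (∀ c ∈ S, mul a c = mul b c) → a = b

/-- `Q` is superfaithful if every subalgebra is faithful. -/
def Superfaithful (Q : Type*) [LQgrp Q] : Prop :=
  ∀ S : Set Q, IsSubalg S → FaithfulOn S

/-- Latin: right multiplications are bijective. -/
def Latin (Q : Type*) [LQgrp Q] : Prop := ∀ a : Q, Function.Bijective (fun b => mul b a)

/-- The displacement group of a rack/quandle. -/
def Dis (Q : Type*) [LQgrp Q] : Subgroup (Equiv.Perm Q) :=
  Subgroup.closure {g : Equiv.Perm Q | ∃ a b : Q, g = LM a * (LM b)⁻¹}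

end LQgrp

/-- A quandle: idempotent, left distributive left quasigroup. -/
class Qdl (Q : Type*) extends LQgrp Q where
  idem : ∀ x : Q, mul x x = x
  ldist : ∀ x y z : Q, mul x (mul y z) = mul (mul x y) (mul x z)

/-- An involutory quandle. -/
class InvQdl (Q : Type*) extends Qdl Q where
  invol : ∀ x y : Q, mul x (mul x y) = y

open LQgrp

/-- A congruence of a left quasigroup. -/
structure IsCong {Q : Type*} [LQgrp Q] (r : Q → Q → Prop) : Prop where
  equiv : Equivalence r
  mul_comp : ∀ a b c d : Q, r a b → r c d → r (mul a c) (mul b d)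
  ld_comp : ∀ a b c d : Q, r a b → r c d → r (ld a c) (ld b d)


namespace LQgrp

variable {Q : Type*} [LQgrp Q]

/-- The orbit decomposition `𝒪_Q`: `a` and `b` lie in the same `LMlt Q`-orbit. -/
def OrbitRel (Q : Type*) [LQgrp Q] (a b : Q) : Prop := ∃ h ∈ LMlt Q, h a = b

theorem LM_mem_LMlt (a : Q) : LM a ∈ LMlt Q :=
  Subgroup.subset_closure ⟨a, rfl⟩

theorem orbitRel_refl (a : Q) : OrbitRel Q a a :=
  ⟨1, one_mem _, rfl⟩

theorem orbitRel_mul_iff (a c d : Q) : OrbitRel Q a (mul c d) ↔ OrbitRel Q a d := by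
  constructor
  · rintro ⟨h, hh, had⟩
    refine ⟨(LM c)⁻¹ * h, mul_mem (inv_mem (LM_mem_LMlt c)) hh, ?_⟩
    rw [Equiv.Perm.mul_apply, had]
    exact ld_mul c d
  · rintro ⟨h, hh, rfl⟩
    exact ⟨LM c * h, mul_mem (LM_mem_LMlt c) hh, rfl⟩

theorem orbitRel_ld_iff (a c d : Q) : OrbitRel Q a (ld c d) ↔ OrbitRel Q a d := by
  rw [← orbitRel_mul_iff a c, mul_ld]

theorem rel_apply_of_mem_LMlt {r : Q → Q → Prop} (hr : Equivalence r)
    (hproj : ∀ a b : Q, r (mul a b) b) {h : Equiv.Perm Q} (hh : h ∈ LMlt Q) (a : Q) :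
    r (h a) a := by
  induction hh using Subgroup.closure_induction generalizing a with
  | mem g hg => obtain ⟨c, rfl⟩ := hg; exact hproj c a
  | one => exact hr.refl a
  | mul g k _ _ hg hk => exact hr.trans (hg (k a)) (hk a)
  | inv g _ hg => exact hr.symm (by simpa using hg (g⁻¹ a))

theorem projection_quotient_iff_orbitRel_le {r : Q → Q → Prop} (hr : Equivalence r) :
    (∀ a b : Q, r (mul a b) b) ↔ ∀ a b : Q, OrbitRel Q a b → r a b := by
  constructor
  · rintro hproj a b ⟨h, hh, rfl⟩
    exact hr.symm (rel_apply_of_mem_LMlt hr hproj hh a)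
  · intro horb a b
    exact hr.symm (horb b (mul a b) ⟨LM a, LM_mem_LMlt a, rfl⟩)

theorem apply_eq_of_connected {α : Type*} (hQ : Connected Q) {f : Q → α}
    (hf : ∀ a b : Q, f (mul a b) = f b) (a b : Q) : f a = f b :=
  (projection_quotient_iff_orbitRel_le (r := fun x y => f x = f y)
    ⟨fun _ => rfl, Eq.symm, Eq.trans⟩).mp hf a b (hQ a b)

/-- The indicator of an orbit that is not all of `Q` maps `Q` onto the two-element projection
left quasigroup. -/
theorem exists_projection_image_of_not_connected (hQ : ¬ Connected Q) :
    ∃ f : Q → Bool, Function.Surjective f ∧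
      (∀ a b : Q, f (mul a b) = f b) ∧ (∀ a b : Q, f (ld a b) = f b) := by
  classical
  obtain ⟨a, b, hab⟩ : ∃ a b : Q, ¬ OrbitRel Q a b := by
    change ¬ ∀ a b : Q, OrbitRel Q a b at hQ
    push Not at hQ
    exact hQ
  refine ⟨fun x => decide (OrbitRel Q a x), ?_, ?_, ?_⟩
  · rintro (_ | _)
    · exact ⟨b, decide_eq_false hab⟩
    · exact ⟨a, decide_eq_true (orbitRel_refl a)⟩
  · intro c d
    exact decide_eq_decide.mpr (orbitRel_mul_iff a c d)
  · intro c d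
    exact decide_eq_decide.mpr (orbitRel_ld_iff a c d)

end LQgrp

/-- `Q/α` is a projection left quasigroup iff the orbit congruence is
below `α`; consequently `Q` is connected iff `𝒫₂` is not a homomorphic image of `Q`. -/
theorem stmt2 {Q : Type*} [LQgrp Q] :
    (∀ r : Q → Q → Prop, IsCong r →
      ((∀ a b : Q, r (mul a b) b) ↔ (∀ a b : Q, (∃ h ∈ LMlt Q, h a = b) → r a b))) ∧
    (Connected Q ↔ ¬ ∃ f : Q → Bool, Function.Surjective f ∧
      (∀ a b : Q, f (mul a b) = f b) ∧ (∀ a b : Q, f (ld a b) = f b)) := by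
  refine ⟨fun r hr => projection_quotient_iff_orbitRel_le hr.equiv,
    ⟨?_, not_imp_comm.mp exists_projection_image_of_not_connected⟩⟩
  rintro hQ ⟨f, hsurj, hmul, -⟩
  obtain ⟨a, ha⟩ := hsurj true
  obtain ⟨b, hb⟩ := hsurj false
  have hab : f a ≠ f b := by simp [ha, hb]
  exact hab (apply_eq_of_connected hQ hmul a b)
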